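/- Let G be a strongly connected directed graph with diameter at most D, a a vertex, and m > 1 an integer such that every closed walk in a given set P_a of closed walks through a has length divisible by m, but some closed walk p' through a has length not divisible by m, where P_a contains, for every vertex v, a closed walk of length d(a,v) + d(v,a). Then there exists an index i along p' such that d(a, p'_{i+1}) - d(a, p'_i) ≢ 1 (mod m), and consequently there exists a closed walk through a of length at most 2D+1 whose length is not divisible by m (namely: shortest walk a→p'_i, the edge p'_i→p'_{i+1}, shortest walk p'_{i+1}→a). -/

import Mathlib

/-!
Along the closed walk `f` the quantity `wdist a (f i) - i` returns to its initial value after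
`L` steps, so if it were constant modulo `m` then `m ∣ L`. Hence some edge `f i → f (i+1)`
breaks `wdist a (f i) + 1 ≡ wdist a (f (i+1))`. Closing that edge with shortest walks gives a
loop of length `wdist a (f i) + 1 + wdist (f (i+1)) a ≤ 2D + 1`; as `m` divides
`wdist a (f (i+1)) + wdist (f (i+1)) a`, this length is `≢ 0 (mod m)`.
-/

/-- There is a directed walk of length `k` from `u` to `v` along relation `R`. -/
def HasWalk {V : Type*} (R : V → V → Prop) (u v : V) (k : ℕ) : Prop :=
  ∃ f : ℕ → V, f 0 = u ∧ f k = v ∧ ∀ i < k, R (f i) (f (i + 1))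

/-- Length of a shortest directed walk from `u` to `v`. -/
noncomputable def wdist {V : Type*} (R : V → V → Prop) (u v : V) : ℕ :=
  sInf {k | HasWalk R u v k}

section Walks

variable {V : Type*} {R : V → V → Prop} {u v w : V} {k l : ℕ}

theorem HasWalk.single (h : R u v) : HasWalk R u v 1 :=
  ⟨fun j => if j = 0 then u else v, by simp, by simp, fun j hj => by
    obtain rfl : j = 0 := by omega
    simpa using h⟩

theorem HasWalk.trans (h₁ : HasWalk R u v k) (h₂ : HasWalk R v w l) :
    HasWalk R u w (k + l) := by
  obtain ⟨f, hf0, hfk, hf⟩ := h₁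
  obtain ⟨g, hg0, hgl, hg⟩ := h₂
  refine ⟨fun j => if j ≤ k then f j else g (j - k), by simp [hf0], ?_, fun j hj => ?_⟩
  · dsimp only
    split_ifs with h
    · obtain rfl : l = 0 := by omega
      simp [hfk, ← hg0, hgl]
    · simpa using hgl
  · dsimp only
    split_ifs with h h' h'
    · exact hf j (by omega)
    · obtain rfl : j = k := by omega
      rw [hfk, ← hg0, show j + 1 - j = 0 + 1 by omega]
      exact hg 0 (by omega)
    · omega
    · rw [show j + 1 - k = j - k + 1 by omega]
      exact hg _ (by omega)

theorem wdist_le (h : HasWalk R u v k) : wdist R u v ≤ k :=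
  Nat.sInf_le h

theorem hasWalk_wdist (h : HasWalk R u v k) : HasWalk R u v (wdist R u v) :=
  Nat.sInf_mem (s := {k | HasWalk R u v k}) ⟨k, h⟩

end Walks

theorem exists_not_modEq_add_one_of_not_dvd {n : ℤ} {L : ℕ} (g : ℕ → ℤ) (hg : g L = g 0)
    (hL : ¬ n ∣ L) : ∃ i < L, ¬ g i + 1 ≡ g (i + 1) [ZMOD n] := by
  by_contra! hstep
  have htel : ∑ i ∈ Finset.range L, (g (i + 1) - (g i + 1)) = -L := by
    have := Finset.sum_range_sub (fun i : ℕ => g i - i) L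
    push_cast at this
    rw [hg] at this
    convert this using 2 <;> ring
  apply hL
  rw [← dvd_neg, ← htel]
  exact Finset.dvd_sum fun i hi => (hstep i (Finset.mem_range.mp hi)).dvd

theorem exists_short_nondivisible_loop_general {V : Type*} (R : V → V → Prop)
    (D : ℕ)
    (hdiam : ∀ u v : V, ∃ k ≤ D, HasWalk R u v k)
    (a : V) (m : ℕ)
    (hPa : ∀ v : V, m ∣ (wdist R a v + wdist R v a))
    (L : ℕ) (f : ℕ → V) (hf0 : f 0 = a) (hfL : f L = a)
    (hedge : ∀ i < L, R (f i) (f (i + 1)))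
    (hndiv : ¬ m ∣ L) :
    (∃ i < L,
      ¬ ((wdist R a (f i) : ℤ) + 1 ≡ (wdist R a (f (i + 1)) : ℤ) [ZMOD (m : ℤ)])) ∧
    (∃ l, 0 < l ∧ l ≤ 2 * D + 1 ∧ HasWalk R a a l ∧ ¬ m ∣ l) := by
  have hwalk : ∀ u v, HasWalk R u v (wdist R u v) := fun u v =>
    let ⟨_, _, h⟩ := hdiam u v; hasWalk_wdist h
  have hle : ∀ u v, wdist R u v ≤ D := fun u v =>
    let ⟨_, hk, h⟩ := hdiam u v; (wdist_le h).trans hk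
  obtain ⟨i, hi, hstep⟩ := exists_not_modEq_add_one_of_not_dvd (n := m) (L := L)
    (fun i => (wdist R a (f i) : ℤ)) (by simp only [hf0, hfL]) (by exact_mod_cast hndiv)
  refine ⟨⟨i, hi, hstep⟩, wdist R a (f i) + 1 + wdist R (f (i + 1)) a, by omega,
    by linarith [hle a (f i), hle (f (i + 1)) a],
    ((hwalk _ _).trans (.single (hedge i hi))).trans (hwalk _ _), fun hloop => hstep ?_⟩
  have hloop' : ((wdist R a (f i) + 1 + wdist R (f (i + 1)) a : ℕ) : ℤ) ≡ 0 [ZMOD m] :=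
    Int.modEq_zero_iff_dvd.2 (Int.natCast_dvd_natCast.2 hloop)
  have hPa' : ((wdist R a (f (i + 1)) + wdist R (f (i + 1)) a : ℕ) : ℤ) ≡ 0 [ZMOD m] :=
    Int.modEq_zero_iff_dvd.2 (Int.natCast_dvd_natCast.2 (hPa _))
  push_cast at hloop' hPa'
  exact Int.ModEq.add_right_cancel' _ (hloop'.trans hPa'.symm)

/-- If every loop through `a` built from shortest walks has length divisible by `m`,
but some closed walk through `a` (given by `f`, of length `L`) has length not divisible
by `m`, then along that walk some step fails the congruence
`wdist a f(i) + 1 ≡ wdist a f(i+1) (mod m)`, and there is a closed walk through `a` of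
length at most `2D + 1` whose length is not divisible by `m`. -/
theorem exists_short_nondivisible_loop {V : Type*} [Fintype V] (R : V → V → Prop)
    (D : ℕ)
    (hSC : ∀ u v : V, ∃ k, 0 < k ∧ HasWalk R u v k)
    (hdiam : ∀ u v : V, ∃ k ≤ D, HasWalk R u v k)
    (a : V) (m : ℕ) (hm : 1 < m)
    (hPa : ∀ v : V, m ∣ (wdist R a v + wdist R v a))
    (L : ℕ) (hL : 0 < L) (f : ℕ → V) (hf0 : f 0 = a) (hfL : f L = a)
    (hedge : ∀ i < L, R (f i) (f (i + 1)))
    (hndiv : ¬ m ∣ L) :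
    (∃ i < L,
      ¬ ((wdist R a (f i) : ℤ) + 1 ≡ (wdist R a (f (i + 1)) : ℤ) [ZMOD (m : ℤ)])) ∧
    (∃ l, 0 < l ∧ l ≤ 2 * D + 1 ∧ HasWalk R a a l ∧ ¬ m ∣ l) :=
  exists_short_nondivisible_loop_general R D hdiam a m hPa L f hf0 hfL hedge hndiv
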